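/- Let H be a graded connected Hopf algebra over ℂ, φ ∈ G_A a character, and Γ ∈ H_n a primitive homogeneous element of degree n. Then R̃(φ^t)(Γ) = n·e^{ntλ}·φ(Γ) for all t ∈ ℂ. (This is the key identity showing that on a commutative, cocommutative graded connected Hopf algebra, where brackets of infinitesimal characters vanish and Lax pair flows are constant, the renormalization group flow φ^t cannot coincide with the Lax pair flow transferred to the character group via R̃^{-1} or exp.) -/

import Mathlib

open scoped TensorProduct

set_option synthInstance.maxHeartbeats 1000000
set_option maxHeartbeats 1600000
set_option linter.unnecessarySeqFocus false

noncomputable section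

/-- The algebra `A = ℂ((λ))` of formal Laurent series with finite pole part. -/
abbrev LS := LaurentSeries ℂ

/-- `ℂ`-scalars commute with multiplication of Laurent series. -/
instance : SMulCommClass ℂ LS LS := by
  constructor
  intro c a b
  show c • (a * b) = a * (c • b)
  rw [← HahnSeries.single_zero_mul_eq_smul, ← HahnSeries.single_zero_mul_eq_smul]
  ring

/-- Scalar tower for `ℂ`-scalars and Laurent series. -/
instance : IsScalarTower ℂ LS LS := by
  constructor
  intro c a b
  show (c • a) * b = c • (a * b)
  rw [← HahnSeries.single_zero_mul_eq_smul, ← HahnSeries.single_zero_mul_eq_smul]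
  ring

/-- `A₊ = ℂ[[λ]]`: the holomorphic part. -/
def Aplus (f : LS) : Prop := ∀ n : ℤ, n < 0 → f.coeff n = 0

/-- `A₋ = λ⁻¹ℂ[λ⁻¹]`: the polar part. -/
def Aminus (f : LS) : Prop := ∀ n : ℤ, 0 ≤ n → f.coeff n = 0

/-- The formal variable `λ`. -/
def lam : LS := HahnSeries.single (1 : ℤ) (1 : ℂ)

/-- `λ^k` for `k : ℤ`. -/
def lamZ (k : ℤ) : LS := HahnSeries.single k (1 : ℂ)

/-- `e^{cλ} = Σ_k c^k λ^k / k!` as a Laurent series. -/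
def expL (c : ℂ) : LS :=
  HahnSeries.ofPowerSeries ℤ ℂ (PowerSeries.mk fun k => c ^ k / (k.factorial : ℂ))

section Hopf

variable {H : Type} [Ring H] [HopfAlgebra ℂ H]

/-- Convolution product of linear maps from a Hopf algebra to `A`. -/
def conv (f g : H →ₗ[ℂ] LS) : H →ₗ[ℂ] LS :=
  LinearMap.mul' ℂ LS ∘ₗ TensorProduct.map f g ∘ₗ Coalgebra.comul

/-- The unit `ε` of the convolution algebra. -/
def epsA : H →ₗ[ℂ] LS := LinearMap.toSpanSingleton ℂ LS 1 ∘ₗ Coalgebra.counit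

/-- Characters: algebra morphisms `H → A` sending `1` to `1`. -/
def IsCharacter (φ : H →ₗ[ℂ] LS) : Prop :=
  φ 1 = 1 ∧ ∀ x y : H, φ (x * y) = φ x * φ y

/-- The group inverse of a character: `φ⁻¹ = φ ∘ S`. -/
def charInv (φ : H →ₗ[ℂ] LS) : H →ₗ[ℂ] LS := φ ∘ₗ HopfAlgebra.antipode (R := ℂ)

/-- Infinitesimal characters: `Z(xy) = Z(x)ε(y) + ε(x)Z(y)`. -/
def IsInfChar (Z : H →ₗ[ℂ] LS) : Prop :=
  ∀ x y : H, Z (x * y) = Z x * epsA y + epsA x * Z y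

/-- The Lie bracket `[Z,Z'] = Z⋆Z' − Z'⋆Z` on infinitesimal characters. -/
def lieBr (Z W : H →ₗ[ℂ] LS) : H →ₗ[ℂ] LS := conv Z W - conv W Z

/-- The adjoint action `Ad(g)L = g⋆L⋆g⁻¹`. -/
def Adc (g L : H →ₗ[ℂ] LS) : H →ₗ[ℂ] LS := conv g (conv L (charInv g))

/-- Convolution powers `Z^{⋆k}`. -/
def convPow (Z : H →ₗ[ℂ] LS) : ℕ → (H →ₗ[ℂ] LS)
  | 0 => epsA
  | k + 1 => conv Z (convPow Z k)

/-- `E = exp(Z)`, the convolution exponential: for each `x ∈ H` the series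
`Σ_k Z^{⋆k}(x)/k!` stabilizes (a finite sum by connectedness) with value `E(x)`. -/
def IsConvExp (Z E : H →ₗ[ℂ] LS) : Prop :=
  ∀ x : H, ∃ N : ℕ, ∀ M : ℕ, N ≤ M →
    E x = ∑ k ∈ Finset.range M, ((k.factorial : ℂ))⁻¹ • convPow Z k x

/- ℂ-valued (scalar) versions, for `β`-functions. -/

/-- Convolution product of ℂ-valued linear maps on a Hopf algebra. -/
def convC (f g : H →ₗ[ℂ] ℂ) : H →ₗ[ℂ] ℂ :=
  LinearMap.mul' ℂ ℂ ∘ₗ TensorProduct.map f g ∘ₗ Coalgebra.comul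

/-- ℂ-valued characters. -/
def IsCharacterC (φ : H →ₗ[ℂ] ℂ) : Prop :=
  φ 1 = 1 ∧ ∀ x y : H, φ (x * y) = φ x * φ y

/-- The group inverse of a ℂ-valued character. -/
def charInvC (φ : H →ₗ[ℂ] ℂ) : H →ₗ[ℂ] ℂ := φ ∘ₗ HopfAlgebra.antipode (R := ℂ)

/-- ℂ-valued infinitesimal characters. -/
def IsInfCharC (Z : H →ₗ[ℂ] ℂ) : Prop :=
  ∀ x y : H, Z (x * y) = Z x * Coalgebra.counit y + Coalgebra.counit x * Z y

end Hopf

section Graded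

variable {H : Type} [Ring H] [HopfAlgebra ℂ H]
variable (𝒜 : ℕ → Submodule ℂ H) [GradedAlgebra 𝒜]

/-- Connectedness: `H₀ = ℂ·1`. -/
def IsConnectedGrading : Prop := 𝒜 0 = Submodule.span ℂ {(1 : H)}

/-- The coproduct is grading-preserving: `Δ(H_n) ⊆ Σ_{i+j=n} H_i ⊗ H_j`. -/
def ComulGraded : Prop :=
  ∀ n : ℕ, ∀ x ∈ 𝒜 n, Coalgebra.comul (R := ℂ) x ∈
    ⨆ p : {p : ℕ × ℕ // p.1 + p.2 = n},
      LinearMap.range (TensorProduct.map ((𝒜 p.1.1).subtype) ((𝒜 p.1.2).subtype))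

/-- The counit is grading-preserving: it vanishes in positive degrees. -/
def CounitGraded : Prop := ∀ n : ℕ, 0 < n → ∀ x ∈ 𝒜 n, Coalgebra.counit (R := ℂ) x = 0

/-- The antipode is grading-preserving. -/
def AntipodeGraded : Prop := ∀ n : ℕ, ∀ x ∈ 𝒜 n, HopfAlgebra.antipode (R := ℂ) x ∈ 𝒜 n

/-- The grading biderivation `Y(x) = n·x` for `x ∈ H_n`. -/
def Ymap : H →ₗ[ℂ] H :=
  (DFinsupp.lsum ℕ fun n : ℕ => ((n : ℂ) • (𝒜 n).subtype)) ∘ₗ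
    (DirectSum.decomposeLinearEquiv 𝒜).toLinearMap

/-- `φ^t`, defined by `φ^t(x) = e^{tλn}·φ(x)` for homogeneous `x` of degree `n`. -/
def charScale (t : ℂ) (φ : H →ₗ[ℂ] LS) : H →ₗ[ℂ] LS :=
  (DFinsupp.lsum ℕ fun n : ℕ => (expL (t * (n : ℂ)) • (φ ∘ₗ (𝒜 n).subtype))) ∘ₗ
    (DirectSum.decomposeLinearEquiv 𝒜).toLinearMap

/-- `R̃(φ) = φ^{-1} ⋆ (φ ∘ Y)`. -/
def Rtilde (φ : H →ₗ[ℂ] LS) : H →ₗ[ℂ] LS := conv (charInv φ) (φ ∘ₗ Ymap 𝒜)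

/-- `(φm, φp)` is the Birkhoff decomposition of `φ`: `φ = φm^{-1} ⋆ φp`, i.e. `φm ⋆ φ = φp`,
with `φp` holomorphic and `φm − ε` a pure pole part. -/
def IsBirkhoff (φ φm φp : H →ₗ[ℂ] LS) : Prop :=
  IsCharacter φm ∧ IsCharacter φp ∧ (∀ x, Aplus (φp x)) ∧
    (∀ x, Aminus (φm x - epsA x)) ∧ conv φm φ = φp

/-- A character is local if the negative Birkhoff part of `φ^t` is independent of `t`. -/
def IsLocal (φ : H →ₗ[ℂ] LS) : Prop :=
  IsCharacter φ ∧ ∃ φm : H →ₗ[ℂ] LS, ∀ t : ℂ, ∃ φp, IsBirkhoff (charScale 𝒜 t φ) φm φp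

/-- `B = tildeβ_φ`:  `B(x) = (d/dt)|_{t=0} (φ^{-1} ⋆ φ^t)(x)`, coefficientwise. -/
def HasTildeBeta (φ B : H →ₗ[ℂ] LS) : Prop :=
  ∀ (x : H) (n : ℤ),
    HasDerivAt (fun t : ℂ => ((conv (charInv φ) (charScale 𝒜 t φ)) x).coeff n)
      ((B x).coeff n) 0

/-- The `β`-function `β_φ = −(Res φ₋) ∘ Y` of a local character whose negative
Birkhoff part is `φm`. -/
def betaFn (φm : H →ₗ[ℂ] LS) : H → ℂ := fun x => -((φm (Ymap 𝒜 x)).coeff (-1))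

end Graded

section Curves

variable {H : Type} [Ring H] [HopfAlgebra ℂ H]

/-- Pointwise (coefficientwise) derivative of a curve of maps `H → A`. -/
def HasDerivAtF (F : ℝ → (H →ₗ[ℂ] LS)) (F' : H →ₗ[ℂ] LS) (t : ℝ) : Prop :=
  ∀ (x : H) (n : ℤ), HasDerivAt (fun s : ℝ => ((F s) x).coeff n) ((F' x).coeff n) t

/-- Pointwise differentiability of a curve of maps `H → A`. -/
def PointwiseDifferentiable (F : ℝ → (H →ₗ[ℂ] LS)) : Prop :=
  ∀ (x : H) (n : ℤ), Differentiable ℝ (fun s : ℝ => ((F s) x).coeff n)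

end Curves

/-- The operator `R = P₊ − P₋` on Laurent series. -/
def Rop : LS →ₗ[ℂ] LS where
  toFun f :=
    { coeff := fun n => if n < 0 then -f.coeff n else f.coeff n
      isPWO_support' := f.isPWO_support'.mono (by
        intro n hn
        simp only [Function.mem_support] at hn ⊢
        by_cases h : n < 0 <;> simp_all) }
  map_add' f g := by
    ext n
    by_cases h : n < 0 <;> simp [h] <;> ring
  map_smul' c f := by
    ext n
    by_cases h : n < 0 <;> simp [h]

/-! On a primitive `Γ` the convolution `R̃(ψ)(Γ) = ψ(SΓ)·ψ(Y 1) + ψ(S 1)·ψ(YΓ)` only sees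
`Γ` and `1`. Since `Y 1 = 0`, `S 1 = 1` and `ψ = φ^t` is `1` on `1 ∈ H₀`, only
`ψ(YΓ) = n·e^{ntλ}·φ(Γ)` survives. -/

section Homogeneous

variable {ι R M N : Type*} [DecidableEq ι] [Semiring R] [AddCommMonoid M] [Module R M]
  [AddCommMonoid N] [Module R N] (𝒜 : ι → Submodule R M) [DirectSum.Decomposition 𝒜]

theorem DirectSum.lsum_comp_decomposeLinearEquiv_apply_of_mem (f : ∀ i, 𝒜 i →ₗ[R] N)
    {i : ι} {x : M} (hx : x ∈ 𝒜 i) :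
    (DFinsupp.lsum ℕ f ∘ₗ (DirectSum.decomposeLinearEquiv 𝒜).toLinearMap) x = f i ⟨x, hx⟩ := by
  rw [LinearMap.comp_apply, LinearEquiv.coe_coe, DirectSum.decomposeLinearEquiv_apply,
    DirectSum.decompose_of_mem 𝒜 hx]
  exact DFinsupp.lsum_single ℕ f i _

end Homogeneous

theorem expL_zero : expL 0 = 1 := by
  have : (PowerSeries.mk fun k => (0 : ℂ) ^ k / (k.factorial : ℂ)) = 1 := by
    ext (_ | _) <;> simp [PowerSeries.coeff_one]
  rw [expL, this, map_one]

section Hopf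

variable {H : Type} [Ring H] [HopfAlgebra ℂ H]

theorem conv_apply_of_primitive {Γ : H}
    (hprim : Coalgebra.comul (R := ℂ) Γ = Γ ⊗ₜ[ℂ] (1 : H) + (1 : H) ⊗ₜ[ℂ] Γ)
    (f g : H →ₗ[ℂ] LS) : conv f g Γ = f Γ * g 1 + f 1 * g Γ := by
  simp only [conv, LinearMap.comp_apply, hprim, map_add, TensorProduct.map_tmul,
    LinearMap.mul'_apply]

theorem charInv_apply_one (φ : H →ₗ[ℂ] LS) : charInv φ 1 = φ 1 := by
  rw [charInv, LinearMap.comp_apply, HopfAlgebra.antipode_one]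

variable (𝒜 : ℕ → Submodule ℂ H) [GradedAlgebra 𝒜]

theorem Ymap_apply_of_mem {m : ℕ} {x : H} (hx : x ∈ 𝒜 m) : Ymap 𝒜 x = (m : ℂ) • x :=
  DirectSum.lsum_comp_decomposeLinearEquiv_apply_of_mem 𝒜 _ hx

theorem Ymap_one : Ymap 𝒜 (1 : H) = 0 := by
  rw [Ymap_apply_of_mem 𝒜 SetLike.GradedOne.one_mem, Nat.cast_zero, zero_smul]

theorem charScale_apply_of_mem (t : ℂ) (φ : H →ₗ[ℂ] LS) {m : ℕ} {x : H} (hx : x ∈ 𝒜 m) :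
    charScale 𝒜 t φ x = expL (t * m) * φ x :=
  DirectSum.lsum_comp_decomposeLinearEquiv_apply_of_mem 𝒜 _ hx

theorem charScale_apply_one (t : ℂ) {φ : H →ₗ[ℂ] LS} (hφ : φ 1 = 1) :
    charScale 𝒜 t φ 1 = 1 := by
  rw [charScale_apply_of_mem 𝒜 t φ SetLike.GradedOne.one_mem, Nat.cast_zero, mul_zero,
    expL_zero, hφ, one_mul]

end Hopf

theorem Rtilde_of_charScale_on_primitive_general
    {H : Type} [Ring H] [HopfAlgebra ℂ H]
    (𝒜 : ℕ → Submodule ℂ H) [GradedAlgebra 𝒜]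
    (n : ℕ) (Γ : H) (hΓ : Γ ∈ 𝒜 n)
    (hprim : Coalgebra.comul (R := ℂ) Γ = Γ ⊗ₜ[ℂ] (1 : H) + (1 : H) ⊗ₜ[ℂ] Γ)
    (φ : H →ₗ[ℂ] LS) (hφ : IsCharacter φ) (t : ℂ) :
    Rtilde 𝒜 (charScale 𝒜 t φ) Γ = (n : ℂ) • (expL ((n : ℂ) * t) * φ Γ) := by
  have hψ : charScale 𝒜 t φ 1 = 1 := charScale_apply_one 𝒜 t hφ.1
  rw [Rtilde, conv_apply_of_primitive hprim, LinearMap.comp_apply,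
    LinearMap.comp_apply, Ymap_one, map_zero, mul_zero, zero_add, charInv_apply_one, hψ,
    one_mul, Ymap_apply_of_mem 𝒜 hΓ, map_smul, charScale_apply_of_mem 𝒜 t φ hΓ, mul_comm t]

/-- **Proposition (key step in comparing the Lax pair flow with the
renormalization group flow).**  Let `φ` be a character of a graded connected
Hopf algebra and `Γ ∈ H_n` a primitive homogeneous element of degree `n`.
Then `R̃(φ^t)(Γ) = n·e^{ntλ}·φ(Γ)` for all `t ∈ ℂ`.  (On a commutative
cocommutative graded connected Hopf algebra, where brackets of infinitesimal
characters vanish and Lax pair flows are constant, this shows the RG flow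
`φ^t` cannot coincide with the Lax pair flow transferred to the character
group via `R̃⁻¹` or `exp`.) -/
theorem Rtilde_of_charScale_on_primitive
    {H : Type} [Ring H] [HopfAlgebra ℂ H]
    (𝒜 : ℕ → Submodule ℂ H) [GradedAlgebra 𝒜]
    (hconn : IsConnectedGrading 𝒜) (hΔ : ComulGraded 𝒜)
    (hcounit : CounitGraded 𝒜) (hS : AntipodeGraded 𝒜)
    (n : ℕ) (Γ : H) (hΓ : Γ ∈ 𝒜 n)
    (hprim : Coalgebra.comul (R := ℂ) Γ = Γ ⊗ₜ[ℂ] (1 : H) + (1 : H) ⊗ₜ[ℂ] Γ)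
    (φ : H →ₗ[ℂ] LS) (hφ : IsCharacter φ) (t : ℂ) :
    Rtilde 𝒜 (charScale 𝒜 t φ) Γ = (n : ℂ) • (expL ((n : ℂ) * t) * φ Γ) :=
  Rtilde_of_charScale_on_primitive_general 𝒜 n Γ hΓ hprim φ hφ t

end
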